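/- For any prime p and integers k ≥ ℓ ≥ 0, the Gaussian binomial coefficient satisfies p^(ℓ(k-ℓ)) ≤ [k choose ℓ]_p ≤ p^(ℓ(k-ℓ))·(1 + 6/p). -/

import Mathlib

/-! With `m = k - ℓ` and `q = 1/p`, each factor `(p^(m+j) - 1)/(p^j - 1)` lies between `p^m` and
`p^m / (1 - q^j)`.
For the upper bound, the Weierstrass product inequality applied to the factors with `j ≥ 2` gives
`∏_{j=1}^ℓ (1 - q^j) ≥ (1 - q)(1 - q²/(1 - q)) = 1 - q - q²`,
and `(1 - q - q²)(1 + 6q) ≥ 1` for `0 ≤ q ≤ 1/2`, with equality at `q = 1/2`. -/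

open Finset

theorem one_sub_sum_le_prod_one_sub {ι R : Type*} [CommRing R] [LinearOrder R]
    [IsStrictOrderedRing R] (s : Finset ι) {f : ι → R}
    (h0 : ∀ i ∈ s, 0 ≤ f i) (h1 : ∀ i ∈ s, f i ≤ 1) :
    1 - ∑ i ∈ s, f i ≤ ∏ i ∈ s, (1 - f i) := by
  induction s using Finset.cons_induction with
  | empty => simp
  | cons a s ha ih =>
    simp only [forall_mem_cons] at h0 h1
    rw [sum_cons, prod_cons]
    have hs : 0 ≤ ∑ i ∈ s, f i := sum_nonneg h0.2
    nlinarith [mul_le_mul_of_nonneg_left (ih h0.2 h1.2) (sub_nonneg.2 h1.1), mul_nonneg h0.1 hs]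

theorem one_sub_sub_sq_le_prod_one_sub_pow {q : ℝ} (hq0 : 0 ≤ q) (hq1 : q < 1) (ℓ : ℕ) :
    1 - q - q ^ 2 ≤ ∏ j ∈ Icc 1 ℓ, (1 - q ^ j) := by
  rcases Nat.eq_zero_or_pos ℓ with rfl | hℓ
  · simp only [Icc_eq_empty_of_lt zero_lt_one, prod_empty]
    nlinarith
  rw [← mul_prod_Ioc_eq_prod_Icc hℓ, ← Ico_add_one_add_one_eq_Ioc]
  have htail : 1 - q ^ 2 / (1 - q) ≤ ∏ j ∈ Ico 2 (ℓ + 1), (1 - q ^ j) :=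
    (sub_le_sub_left (geom_sum_Ico_le_of_lt_one hq0 hq1) 1).trans <|
      one_sub_sum_le_prod_one_sub _ (fun j _ ↦ pow_nonneg hq0 j)
        (fun j _ ↦ pow_le_one₀ hq0 hq1.le)
  calc 1 - q - q ^ 2 = (1 - q) * (1 - q ^ 2 / (1 - q)) := by
        field_simp [(sub_pos.2 hq1).ne']
    _ ≤ (1 - q ^ 1) * ∏ j ∈ Ico 2 (ℓ + 1), (1 - q ^ j) := by
        rw [pow_one]
        exact mul_le_mul_of_nonneg_left htail (sub_nonneg.2 hq1.le)

theorem inv_prod_one_sub_pow_le {q : ℝ} (hq0 : 0 ≤ q) (hq : q ≤ 1 / 2) (ℓ : ℕ) :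
    (∏ j ∈ Icc 1 ℓ, (1 - q ^ j))⁻¹ ≤ 1 + 6 * q := by
  have hpos : 0 < 1 - q - q ^ 2 := by nlinarith
  calc (∏ j ∈ Icc 1 ℓ, (1 - q ^ j))⁻¹ ≤ (1 - q - q ^ 2)⁻¹ :=
        inv_anti₀ hpos (one_sub_sub_sq_le_prod_one_sub_pow hq0 (by linarith) ℓ)
    _ ≤ 1 + 6 * q := by
        rw [inv_le_iff_one_le_mul₀ hpos]
        nlinarith

theorem pow_le_pow_add_sub_one_div {x : ℝ} (hx : 1 < x) (m : ℕ) {j : ℕ} (hj : 0 < j) :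
    x ^ m ≤ (x ^ (m + j) - 1) / (x ^ j - 1) := by
  have hxj : 0 < x ^ j - 1 := sub_pos.2 (one_lt_pow₀ hx hj.ne')
  rw [le_div_iff₀ hxj, pow_add]
  nlinarith [one_le_pow₀ (M₀ := ℝ) hx.le (n := m)]

theorem pow_add_sub_one_div_le {x : ℝ} (hx : 1 < x) (m : ℕ) {j : ℕ} (hj : 0 < j) :
    (x ^ (m + j) - 1) / (x ^ j - 1) ≤ x ^ m * (1 - x⁻¹ ^ j)⁻¹ := by
  have hxj : 0 < x ^ j - 1 := sub_pos.2 (one_lt_pow₀ hx hj.ne')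
  have hrw : x ^ m * (1 - x⁻¹ ^ j)⁻¹ = x ^ (m + j) / (x ^ j - 1) := by
    have hxj0 : x ^ j ≠ 0 := by positivity
    rw [inv_pow, pow_add]
    field_simp
  rw [hrw]
  gcongr
  linarith

theorem prod_Icc_one_const_pow {M : Type*} [CommMonoid M] (x : M) (ℓ m : ℕ) :
    ∏ _j ∈ Icc 1 ℓ, x ^ m = x ^ (ℓ * m) := by
  rw [prod_const, Nat.card_Icc, Nat.add_sub_cancel, ← pow_mul, mul_comm]

noncomputable def gaussBinom (x : ℝ) (k ℓ : ℕ) : ℝ :=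
  ∏ j ∈ Icc 1 ℓ, (x ^ (k - ℓ + j) - 1) / (x ^ j - 1)

theorem pow_le_gaussBinom {x : ℝ} (hx : 1 < x) (k ℓ : ℕ) :
    x ^ (ℓ * (k - ℓ)) ≤ gaussBinom x k ℓ := by
  calc x ^ (ℓ * (k - ℓ)) = ∏ _j ∈ Icc 1 ℓ, x ^ (k - ℓ) :=
        (prod_Icc_one_const_pow x ℓ _).symm
    _ ≤ gaussBinom x k ℓ :=
        prod_le_prod (fun _ _ ↦ by positivity) fun j hj ↦
          pow_le_pow_add_sub_one_div hx _ (mem_Icc.1 hj).1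

theorem gaussBinom_le {x : ℝ} (hx : 2 ≤ x) (k ℓ : ℕ) :
    gaussBinom x k ℓ ≤ x ^ (ℓ * (k - ℓ)) * (1 + 6 / x) := by
  have hx1 : 1 < x := by linarith
  calc gaussBinom x k ℓ ≤ ∏ j ∈ Icc 1 ℓ, x ^ (k - ℓ) * (1 - x⁻¹ ^ j)⁻¹ :=
        prod_le_prod
          (fun j hj ↦ (pow_nonneg (by positivity) _).trans
            (pow_le_pow_add_sub_one_div hx1 _ (mem_Icc.1 hj).1))
          fun j hj ↦ pow_add_sub_one_div_le hx1 _ (mem_Icc.1 hj).1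
    _ = x ^ (ℓ * (k - ℓ)) * (∏ j ∈ Icc 1 ℓ, (1 - x⁻¹ ^ j))⁻¹ := by
        rw [prod_mul_distrib, prod_Icc_one_const_pow, prod_inv_distrib]
    _ ≤ x ^ (ℓ * (k - ℓ)) * (1 + 6 / x) := by
        rw [div_eq_mul_inv 6]
        gcongr
        have hq : x⁻¹ ≤ 1 / 2 := by rw [one_div]; exact inv_anti₀ two_pos hx
        exact inv_prod_one_sub_pow_le (by positivity) hq ℓ

theorem gaussian_binomial_bounds_general (p k ℓ : ℕ) (hp : p.Prime) :
    (p : ℝ) ^ (ℓ * (k - ℓ))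
        ≤ ∏ j ∈ Finset.Icc 1 ℓ, ((p : ℝ) ^ (k - ℓ + j) - 1) / ((p : ℝ) ^ j - 1) ∧
      ∏ j ∈ Finset.Icc 1 ℓ, ((p : ℝ) ^ (k - ℓ + j) - 1) / ((p : ℝ) ^ j - 1)
        ≤ (p : ℝ) ^ (ℓ * (k - ℓ)) * (1 + 6 / p) := by
  have hp2 : (2 : ℝ) ≤ p := mod_cast hp.two_le
  exact ⟨pow_le_gaussBinom (by linarith) k ℓ, gaussBinom_le hp2 k ℓ⟩

/-- For any prime `p` and integers `k ≥ ℓ ≥ 0`, the Gaussian binomial coefficient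
`[k choose ℓ]_p = ∏_{j=1}^{ℓ} (p^(k-ℓ+j) - 1)/(p^j - 1)` satisfies
`p^(ℓ(k-ℓ)) ≤ [k choose ℓ]_p ≤ p^(ℓ(k-ℓ)) (1 + 6/p)`. -/
theorem gaussian_binomial_bounds (p k ℓ : ℕ) (hp : p.Prime) (hℓk : ℓ ≤ k) :
    (p : ℝ) ^ (ℓ * (k - ℓ))
        ≤ ∏ j ∈ Finset.Icc 1 ℓ, ((p : ℝ) ^ (k - ℓ + j) - 1) / ((p : ℝ) ^ j - 1) ∧
      ∏ j ∈ Finset.Icc 1 ℓ, ((p : ℝ) ^ (k - ℓ + j) - 1) / ((p : ℝ) ^ j - 1)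
        ≤ (p : ℝ) ^ (ℓ * (k - ℓ)) * (1 + 6 / p) :=
  gaussian_binomial_bounds_general p k ℓ hp
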